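/- There is no countable family (Aₙ) of infinite subsets of ℕ that is maximal almost disjoint: for every sequence of pairwise almost disjoint infinite sets Aₙ ⊆ ℕ, there exists an infinite set B ⊆ ℕ with B ∩ Aₙ finite for every n. -/
import Mathlib


/-- No countable family of infinite pairwise almost disjoint sets is maximal
almost disjoint. -/
theorem stmt_9 (A : ℕ → Set ℕ)
    (hinf : ∀ n, (A n).Infinite)
    (had : ∀ n m, n ≠ m → (A n ∩ A m).Finite) :
    ∃ B : Set ℕ, B.Infinite ∧ ∀ n, (B ∩ A n).Finite := by
  -- S n : elements of A n not in any earlier A k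
  set S : ℕ → Set ℕ := fun n => A n \ ⋃ k ∈ Finset.range n, A k with hS
  have hSinf : ∀ n, (S n).Infinite := by
    intro n
    have hfin : (A n ∩ ⋃ k ∈ Finset.range n, A k).Finite := by
      rw [Set.inter_iUnion₂]
      apply Set.Finite.biUnion (Finset.range n).finite_toSet
      intro k hk
      exact had n k (by simp at hk; omega)
    have : S n = A n \ (A n ∩ ⋃ k ∈ Finset.range n, A k) := by
      rw [hS]; ext x; simp
    rw [this]
    exact (hinf n).diff hfin
  choose b hb using fun n => (hSinf n).nonempty
  have hbA : ∀ n, b n ∈ A n := fun n => (hb n).1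
  have hbnot : ∀ k n, k < n → b n ∉ A k := by
    intro k n hkn hmem
    exact (hb n).2 (Set.mem_biUnion (Finset.mem_range.mpr hkn) hmem)
  have hinj : Function.Injective b := by
    intro m n hmn
    by_contra h
    rcases lt_or_gt_of_ne h with h' | h'
    · exact hbnot m n h' (hmn ▸ hbA m)
    · exact hbnot n m h' (hmn ▸ hbA n)
  refine ⟨Set.range b, Set.infinite_range_of_injective hinj, fun n => ?_⟩
  have hsub : Set.range b ∩ A n ⊆ b '' Set.Iic n := by
    rintro x ⟨⟨m, rfl⟩, hx⟩
    refine ⟨m, ?_, rfl⟩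
    by_contra hm
    exact hbnot n m (by simpa using hm) hx
  exact ((Set.finite_Iic n).image b).subset hsub
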